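/- arXiv:cs/0407004 — 4 statements merged into one kernel-verified Lean document; each statement's English description precedes it below -/
import Mathlib

section
/- If a' < a, then the List(a,a+1)-channel cannot simulate the List(a',a'+1)-channel in one use: there do not exist an encoder e : Fin (a'+1) → Fin (a+1) and a decoder g from a-element subsets of Fin (a+1) to a'-element subsets of Fin (a'+1) such that for all x and all a-subsets y containing e(x), x ∈ g(y). -/
/-- If `a' < a`, the `List(a,a+1)`-channel cannot simulate the
`List(a',a'+1)`-channel in one use. -/
theorem stmt_4 (a a' : ℕ) (h : a' < a) :
    ¬ ∃ (e : Fin (a' + 1) → Fin (a + 1))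
        (g : {y : Finset (Fin (a + 1)) // y.card = a} →
             {y' : Finset (Fin (a' + 1)) // y'.card = a'}),
        ∀ (x : Fin (a' + 1)) (y : {y : Finset (Fin (a + 1)) // y.card = a}),
          e x ∈ y.val → x ∈ (g y).val := by
  rintro ⟨e, g, hg⟩
  set S := Finset.image e Finset.univ with hS
  have hcard : S.card ≤ a := by
    calc S.card ≤ (Finset.univ : Finset (Fin (a' + 1))).card := Finset.card_image_le
    _ = a' + 1 := by simp
    _ ≤ a := h
  obtain ⟨t, hst, ht⟩ := Finset.exists_superset_card_eq hcard
    (by simp)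
  -- every x is in (g ⟨t, ht⟩).val
  have hall : ∀ x : Fin (a' + 1), x ∈ (g ⟨t, ht⟩).val := fun x =>
    hg x ⟨t, ht⟩ (hst (Finset.mem_image_of_mem e (Finset.mem_univ x)))
  have : (a' + 1) ≤ a' := by
    calc a' + 1 = (Finset.univ : Finset (Fin (a' + 1))).card := by simp
    _ ≤ (g ⟨t, ht⟩).val.card := Finset.card_le_card (fun x _ => hall x)
    _ = a' := (g ⟨t, ht⟩).prop
  omega
end

section
/- Define the ambiguity A(W) of a zero-error channel W on finite alphabets X, Y as the largest a such that every a-tuple of inputs x₁,…,x_a ∈ X satisfies W(x₁) ∩ ⋯ ∩ W(x_a) ≠ ∅ (and A(W) = ∞ if all finite tuples of inputs are adjacent). If A(W) = a < ∞, then the List(a, |X|)-channel simulates W in one use: there exists a bijection f : Fin |X| → X and a decoder g mapping each a-element subset {v₁,…,v_a} of Fin |X| to some element of W(f(v₁)) ∩ ⋯ ∩ W(f(v_a)), and this decoder is well-defined (the intersection is nonempty) and achieves zero-error simulation of W. -/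
/-- If the ambiguity of a zero-error channel `W` on finite alphabets is
`a < ∞` (every `a`-tuple of inputs is adjacent, some `(a+1)`-tuple is not),
then the `List(a, |X|)`-channel simulates `W` in one use: there is a
bijection `f : Fin |X| → X` and a decoder `g` assigning to each `a`-element
subset `s` of `Fin |X|` an element of `⋂_{v ∈ s} W(f v)`; this yields a
zero-error simulation of `W`. -/
theorem stmt_5 {X Y : Type*} [Fintype X] [Fintype Y] [DecidableEq X]
    (W : X → Y → Prop) (a : ℕ) (ha : 1 ≤ a)
    (hne : ∀ x : X, ∃ y : Y, W x y)
    (hadj : ∀ f : Fin a → X, ∃ y : Y, ∀ i, W (f i) y)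
    (hsep : ∃ f : Fin (a + 1) → X, ¬ ∃ y : Y, ∀ i, W (f i) y) :
    ∃ f : Fin (Fintype.card X) → X, Function.Bijective f ∧
      ∃ g : {s : Finset (Fin (Fintype.card X)) // s.card = a} → Y,
        (∀ s : {s : Finset (Fin (Fintype.card X)) // s.card = a},
            ∀ v ∈ s.val, W (f v) (g s)) ∧
        ∃ e : X → Fin (Fintype.card X),
          ∀ (x : X) (s : {s : Finset (Fin (Fintype.card X)) // s.card = a}),
            e x ∈ s.val → W x (g s) := by
  classical
  set eqv : Fin (Fintype.card X) ≃ X := (Fintype.equivFin X).symm with heqv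
  refine ⟨eqv, eqv.bijective, ?_⟩
  have key : ∀ s : {s : Finset (Fin (Fintype.card X)) // s.card = a},
      ∃ y : Y, ∀ v ∈ s.val, W (eqv v) y := by
    rintro ⟨s, hs⟩
    obtain ⟨y, hy⟩ := hadj (fun i => eqv (s.orderIsoOfFin hs i))
    refine ⟨y, fun v hv => ?_⟩
    obtain ⟨i, hi⟩ := (s.orderIsoOfFin hs).surjective ⟨v, hv⟩
    have := hy i
    rw [hi] at this
    exact this
  choose g hg using key
  refine ⟨g, hg, eqv.symm, fun x s hx => ?_⟩
  have := hg s _ hx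
  simpa using this
end

section
/- Upper bound for serial concatenation: let W₁ ⊆ X × Y and W₂ ⊆ Y × Z be zero-error channels on finite alphabets, and let W_s = W₂ ∘ W₁ be their composition. If no a₁+1 distinct inputs of W₁ are adjacent (i.e. share a common output) and no a₂+1 distinct inputs of W₂ are adjacent, then no a₁·a₂+1 distinct inputs of W₂ ∘ W₁ are adjacent. -/
/-- Upper bound for serial concatenation: if no `a₁+1` distinct inputs of `W₁`
are adjacent and no `a₂+1` distinct inputs of `W₂` are adjacent, then no
`a₁·a₂+1` distinct inputs of the composition `W₂ ∘ W₁` are adjacent. -/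
theorem stmt_10 {X Y Z : Type*} [DecidableEq X] [DecidableEq Y]
    (W₁ : X → Y → Prop) (W₂ : Y → Z → Prop) (a₁ a₂ : ℕ)
    (h₁ : ∀ S : Finset X, S.card = a₁ + 1 → ¬ ∃ y : Y, ∀ x ∈ S, W₁ x y)
    (h₂ : ∀ T : Finset Y, T.card = a₂ + 1 → ¬ ∃ z : Z, ∀ y ∈ T, W₂ y z) :
    ∀ S : Finset X, S.card = a₁ * a₂ + 1 →
      ¬ ∃ z : Z, ∀ x ∈ S, ∃ y : Y, W₁ x y ∧ W₂ y z := by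
  classical
  rintro S hS ⟨z, hz⟩
  choose f hfW₁ hfW₂ using hz
  set g : {x // x ∈ S} → Y := fun x => f x.1 x.2 with hg
  set T : Finset Y := S.attach.image g with hT
  -- every y in T satisfies W₂ y z
  have hTW : ∀ y ∈ T, W₂ y z := by
    intro y hy
    rw [hT, Finset.mem_image] at hy
    obtain ⟨x, -, rfl⟩ := hy
    exact hfW₂ x.1 x.2
  -- T.card ≤ a₂
  have hTcard : T.card ≤ a₂ := by
    by_contra h
    push_neg at h
    obtain ⟨U, hUsub, hUcard⟩ := Finset.exists_subset_card_eq (s := T) (n := a₂ + 1) h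
    exact h₂ U hUcard ⟨z, fun y hy => hTW y (hUsub hy)⟩
  -- each fiber has card ≤ a₁
  have hfib : ∀ y ∈ T, (S.attach.filter (fun x => g x = y)).card ≤ a₁ := by
    intro y _
    by_contra h
    push_neg at h
    obtain ⟨U, hUsub, hUcard⟩ :=
      Finset.exists_subset_card_eq (s := S.attach.filter (fun x => g x = y)) (n := a₁ + 1) h
    have hinj : Set.InjOn Subtype.val (U : Set {x // x ∈ S}) :=
      Subtype.val_injective.injOn
    refine h₁ (U.image Subtype.val) (by rw [Finset.card_image_of_injOn hinj, hUcard])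
      ⟨y, ?_⟩
    intro x hx
    rw [Finset.mem_image] at hx
    obtain ⟨x', hx', rfl⟩ := hx
    have := hUsub hx'
    rw [Finset.mem_filter] at this
    have hgy : g x' = y := this.2
    have := hfW₁ x'.1 x'.2
    rwa [← hgy]
  have := Finset.card_le_mul_card_image (f := g) S.attach a₁ hfib
  rw [Finset.card_attach, hS, ← hT] at this
  have : a₁ * a₂ + 1 ≤ a₁ * a₂ :=
    this.trans (Nat.mul_le_mul_left a₁ hTcard)
  omega
end

section
/- Parallel concatenation with threshold adversary, honest-side bound: let n channels have ambiguities A₁,…,A_n, let t < n be the number of possibly malicious channels, and set A* = min over nonempty G ⊆ {1,…,n} with |G| > t of ⌊(∑_{i∈G} Aᵢ)/(|G| − t)⌋. Then for any multiset of received candidate value-lists where channel i outputs a set Vᵢ of values with |Vᵢ| ≤ Aᵢ for honest i, and the true value v lies in Vᵢ for every honest channel i (at least n − t channels honest), the set of values occurring in at least |G| − t of the sets {Vᵢ : i ∈ G} (for the minimizing G) contains v and has size at most A*. (Counting argument underlying Theorem 8's achievability.) -/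
/-!
At most `t` channels of `G` are dishonest, so the true value lies in at least `|G| - t` of the
sets `Vᵢ`, `i ∈ G`. Conversely, double counting the incidences `w ∈ Vᵢ` shows that at most
`(∑_{i ∈ G} Aᵢ) / (|G| - t)` values can each lie in `|G| - t` of these sets.
-/

open Finset

namespace Finset

variable {ι α : Type*} [DecidableEq α]

def thresholdValues (G : Finset ι) (V : ι → Finset α) (k : ℕ) : Finset α :=
  (G.biUnion V).filter (fun w => k ≤ #(G.filter (fun i => w ∈ V i)))

theorem mem_thresholdValues {G : Finset ι} {V : ι → Finset α} {k : ℕ} (hk : 0 < k) {w : α} :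
    w ∈ thresholdValues G V k ↔ k ≤ #(G.filter (fun i => w ∈ V i)) := by
  refine ⟨fun hw => (mem_filter.mp hw).2, fun hw => mem_filter.mpr ⟨?_, hw⟩⟩
  obtain ⟨i, hi⟩ := card_pos.mp (hk.trans_le hw)
  exact mem_biUnion.mpr ⟨i, (mem_filter.mp hi).1, (mem_filter.mp hi).2⟩

theorem card_thresholdValues_mul_le (G : Finset ι) (V : ι → Finset α) (k : ℕ) :
    #(thresholdValues G V k) * k ≤ ∑ i ∈ G, #(V i) := by
  set S := thresholdValues G V k
  calc #S * k ≤ ∑ w ∈ S, #(G.filter (fun i => w ∈ V i)) :=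
        card_nsmul_le_sum S _ k fun w hw => (mem_filter.mp hw).2
    _ = ∑ i ∈ G, #(S.filter (fun w => w ∈ V i)) :=
        sum_card_bipartiteAbove_eq_sum_card_bipartiteBelow (fun w i => w ∈ V i)
    _ ≤ ∑ i ∈ G, #(V i) := sum_le_sum fun i _ => card_le_card fun _ hw => (mem_filter.mp hw).2

theorem card_thresholdValues_le_div {G : Finset ι} {V : ι → Finset α} {A : ι → ℕ}
    (hA : ∀ i ∈ G, #(V i) ≤ A i) {k : ℕ} (hk : 0 < k) :
    #(thresholdValues G V k) ≤ (∑ i ∈ G, A i) / k :=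
  (Nat.le_div_iff_mul_le hk).mpr <|
    (card_thresholdValues_mul_le G V k).trans (sum_le_sum hA)

theorem card_sub_le_card_filter_mem [Fintype ι] [DecidableEq ι] {H : Finset ι} {t : ℕ}
    (hH : #(univ \ H) ≤ t) {V : ι → Finset α} {v : α} (hv : ∀ i ∈ H, v ∈ V i)
    (G : Finset ι) : #G - t ≤ #(G.filter (fun i => v ∈ V i)) := by
  have hbad : #(G \ H) ≤ t :=
    (card_le_card (sdiff_subset_sdiff (subset_univ G) le_rfl)).trans hH
  have hgood : G ∩ H ⊆ G.filter (fun i => v ∈ V i) := fun i hi =>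
    mem_filter.mpr ⟨(mem_inter.mp hi).1, hv i (mem_inter.mp hi).2⟩
  have := card_inter_add_card_sdiff G H
  have := card_le_card hgood
  omega

end Finset

theorem stmt_11_general {α : Type*} [DecidableEq α] (n t : ℕ)
    (A : Fin n → ℕ) (V : Fin n → Finset α) (v : α)
    (H : Finset (Fin n)) (hH : (Finset.univ \ H).card ≤ t)
    (hhonest : ∀ i ∈ H, v ∈ V i ∧ (V i).card ≤ A i)
    (G : Finset (Fin n)) (hG : t < G.card)
    (hGcard : ∀ i ∈ G, (V i).card ≤ A i) :
    v ∈ (G.biUnion V).filter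
        (fun w => G.card - t ≤ (G.filter (fun i => w ∈ V i)).card) ∧
    ((G.biUnion V).filter
        (fun w => G.card - t ≤ (G.filter (fun i => w ∈ V i)).card)).card ≤
      (∑ i ∈ G, A i) / (G.card - t) := by
  have hk : 0 < G.card - t := Nat.sub_pos_of_lt hG
  exact ⟨(mem_thresholdValues hk).mpr <|
      card_sub_le_card_filter_mem hH (fun i hi => (hhonest i hi).1) G,
    card_thresholdValues_le_div hGcard hk⟩

/-- Honest-side bound for threshold parallel concatenation: if at most `t` of
`n` channels are malicious (the honest set `H` misses at most `t` indices),
every honest channel's output set `V i` contains the true value `v` and has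
at most `A i` elements, and `G` is a set of more than `t` channels each
outputting at most `A i` values, then the set of values occurring in at least
`|G| − t` of the sets `Vᵢ, i ∈ G` contains `v` and has at most
`⌊(∑_{i∈G} A i)/(|G|−t)⌋` elements (which equals `A*` for the minimizing `G`). -/
theorem stmt_11 {α : Type*} [DecidableEq α] (n t : ℕ) (ht : t < n)
    (A : Fin n → ℕ) (V : Fin n → Finset α) (v : α)
    (H : Finset (Fin n)) (hH : (Finset.univ \ H).card ≤ t)
    (hhonest : ∀ i ∈ H, v ∈ V i ∧ (V i).card ≤ A i)
    (G : Finset (Fin n)) (hG : t < G.card)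
    (hGcard : ∀ i ∈ G, (V i).card ≤ A i)
    (hmin : ∀ G' : Finset (Fin n), t < G'.card →
      (∑ i ∈ G, A i) / (G.card - t) ≤ (∑ i ∈ G', A i) / (G'.card - t)) :
    v ∈ (G.biUnion V).filter
        (fun w => G.card - t ≤ (G.filter (fun i => w ∈ V i)).card) ∧
    ((G.biUnion V).filter
        (fun w => G.card - t ≤ (G.filter (fun i => w ∈ V i)).card)).card ≤
      (∑ i ∈ G, A i) / (G.card - t) :=
  stmt_11_general n t A V v H hH hhonest G hG hGcard
end
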